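/- Global mintermisation preserves the language of an SFA: the SFA M and its globally mintermised version M_G accept the same language. -/

import Mathlib

/-- An effective Boolean algebra over domain `D` with predicates `P`. -/
structure EBA (D P : Type) where
  denote : P → Set D
  disj : P → P → P
  conj : P → P → P
  neg : P → P
  top : P
  bot : P
  denote_disj : ∀ φ ψ, denote (disj φ ψ) = denote φ ∪ denote ψ
  denote_conj : ∀ φ ψ, denote (conj φ ψ) = denote φ ∩ denote ψ
  denote_neg : ∀ φ, denote (neg φ) = (denote φ)ᶜ
  denote_top : denote top = Set.univ
  denote_bot : denote bot = ∅

/-- Conjunction of a list of predicates. -/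
def EBA.bigConj {D P : Type} (A : EBA D P) : List P → P
  | [] => A.top
  | φ :: l => A.conj φ (A.bigConj l)

/-- The minterm of `Φ` determined by the subset `Φ' ⊆ Φ`:
`⋀_{φ∈Φ'} φ ∧ ⋀_{φ∈Φ∖Φ'} ¬φ`. -/
noncomputable def EBA.mintermOf {D P : Type} [DecidableEq P] (A : EBA D P) (Φ Φ' : Finset P) : P :=
  A.conj (A.bigConj Φ'.toList) (A.bigConj ((Φ \ Φ').toList.map A.neg))

/-- The globally mintermised transition relation. -/
def globalMinterms {Q D P : Type} [DecidableEq P] (A : EBA D P)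
    (Δ : Set (Q × P × Q)) (PD : Finset P) : Set (Q × P × Q) :=
  {y | ∃ (φ : P) (Φ' : Finset P), (y.1, φ, y.2.2) ∈ Δ ∧ Φ' ⊆ PD ∧
    y.2.1 = A.mintermOf PD Φ' ∧ (A.denote y.2.1).Nonempty ∧
    (A.denote y.2.1 ∩ A.denote φ).Nonempty}

/-- Acceptance of a word from a state over the concrete transitions of `Δ`. -/
def acceptsFrom {Q D P : Type} (A : EBA D P) (Δ : Set (Q × P × Q)) (F : Set Q) :
    Q → List D → Prop
  | q, [] => q ∈ F
  | q, a :: w => ∃ q' ψ, (q, ψ, q') ∈ Δ ∧ a ∈ A.denote ψ ∧ acceptsFrom A Δ F q' w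

/-- A word is accepted if some accepting run starts in an initial state. -/
def accepts {Q D P : Type} (A : EBA D P) (Δ : Set (Q × P × Q)) (I F : Set Q)
    (w : List D) : Prop :=
  ∃ q ∈ I, acceptsFrom A Δ F q w

/-! The minterm of `PD` selected by the letter `a` (the predicates it satisfies) contains `a`, so
every concrete transition of `M` is simulated in `M_G`. Conversely, a minterm of `PD` lies entirely
inside or entirely outside each `φ ∈ PD`; a minterm that meets the guard `φ` of the original
transition is thus contained in it, so every concrete transition of `M_G` is one of `M`. -/

namespace EBA

variable {D P : Type} (A : EBA D P)

lemma mem_denote_bigConj (a : D) :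
    ∀ l : List P, a ∈ A.denote (A.bigConj l) ↔ ∀ φ ∈ l, a ∈ A.denote φ
  | [] => by simp [bigConj, A.denote_top]
  | φ :: l => by
    simp only [bigConj, A.denote_conj, Set.mem_inter_iff, List.forall_mem_cons,
      mem_denote_bigConj a l]

variable [DecidableEq P]

lemma mem_denote_mintermOf (a : D) (Φ Φ' : Finset P) :
    a ∈ A.denote (A.mintermOf Φ Φ') ↔
      (∀ φ ∈ Φ', a ∈ A.denote φ) ∧ ∀ φ ∈ Φ, φ ∉ Φ' → a ∉ A.denote φ := by
  simp only [mintermOf, A.denote_conj, Set.mem_inter_iff, mem_denote_bigConj, List.forall_mem_map,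
    A.denote_neg, Set.mem_compl_iff, Finset.mem_toList, Finset.mem_sdiff, and_imp]

open Classical in
lemma mem_denote_mintermOf_filter (a : D) (Φ : Finset P) :
    a ∈ A.denote (A.mintermOf Φ {φ ∈ Φ | a ∈ A.denote φ}) := by
  rw [mem_denote_mintermOf]
  exact ⟨fun φ hφ => (Finset.mem_filter.1 hφ).2,
    fun φ hφ hφ' ha => hφ' (Finset.mem_filter.2 ⟨hφ, ha⟩)⟩

lemma denote_mintermOf_subset_of_inter_nonempty {Φ Φ' : Finset P} {φ : P} (hφ : φ ∈ Φ)
    (h : (A.denote (A.mintermOf Φ Φ') ∩ A.denote φ).Nonempty) :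
    A.denote (A.mintermOf Φ Φ') ⊆ A.denote φ := by
  obtain ⟨b, hb, hbφ⟩ := h
  intro a ha
  by_cases hφ' : φ ∈ Φ'
  · exact ((A.mem_denote_mintermOf a Φ Φ').1 ha).1 φ hφ'
  · exact absurd hbφ (((A.mem_denote_mintermOf b Φ Φ').1 hb).2 φ hφ hφ')

end EBA

section Runs

variable {Q D P : Type} (A : EBA D P)

/-- The concrete transition relation `⟦Δ⟧`. -/
def concreteStep (Δ : Set (Q × P × Q)) (q : Q) (a : D) (q' : Q) : Prop :=
  ∃ ψ, (q, ψ, q') ∈ Δ ∧ a ∈ A.denote ψ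

lemma acceptsFrom_cons {Δ : Set (Q × P × Q)} (F : Set Q) (q : Q) (a : D) (w : List D) :
    acceptsFrom A Δ F q (a :: w) ↔ ∃ q', concreteStep A Δ q a q' ∧ acceptsFrom A Δ F q' w := by
  simp only [acceptsFrom, concreteStep, ← exists_and_right, and_assoc]

lemma acceptsFrom_congr {Δ Δ' : Set (Q × P × Q)} (F : Set Q)
    (h : ∀ q a q', concreteStep A Δ q a q' ↔ concreteStep A Δ' q a q') :
    ∀ (q : Q) (w : List D), acceptsFrom A Δ F q w ↔ acceptsFrom A Δ' F q w
  | _, [] => Iff.rfl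
  | q, a :: w => by
    simp only [acceptsFrom_cons]
    exact exists_congr fun q' => and_congr (h q a q') (acceptsFrom_congr F h q' w)

lemma accepts_congr {Δ Δ' : Set (Q × P × Q)} (I F : Set Q)
    (h : ∀ q a q', concreteStep A Δ q a q' ↔ concreteStep A Δ' q a q') (w : List D) :
    accepts A Δ I F w ↔ accepts A Δ' I F w :=
  exists_congr fun q => and_congr_right fun _ => acceptsFrom_congr A F h q w

variable [DecidableEq P]

lemma concreteStep_globalMinterms_iff {Δ : Set (Q × P × Q)} {PD : Finset P}
    (hguard : ∀ p φ q, (p, φ, q) ∈ Δ → φ ∈ PD) (q : Q) (a : D) (q' : Q) :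
    concreteStep A (globalMinterms A Δ PD) q a q' ↔ concreteStep A Δ q a q' := by
  constructor
  · rintro ⟨ω, ⟨φ, Φ', hΔ, -, rfl, -, hmeet⟩, ha⟩
    exact ⟨φ, hΔ, A.denote_mintermOf_subset_of_inter_nonempty (hguard _ _ _ hΔ) hmeet ha⟩
  · rintro ⟨φ, hΔ, ha⟩
    classical
    have hω := A.mem_denote_mintermOf_filter a PD
    exact ⟨_, ⟨φ, _, hΔ, Finset.filter_subset _ _, rfl, ⟨a, hω⟩, ⟨a, hω, ha⟩⟩, hω⟩

end Runs

theorem globalMinterms_preserves_language_general {Q D P : Type} [DecidableEq P]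
    (A : EBA D P) (Δ : Set (Q × P × Q)) (I F : Set Q) (PD : Finset P)
    (hPD : ↑PD = {φ : P | ∃ p q, (p, φ, q) ∈ Δ}) :
    ∀ w : List D, accepts A Δ I F w ↔ accepts A (globalMinterms A Δ PD) I F w := by
  have hguard : ∀ p φ q, (p, φ, q) ∈ Δ → φ ∈ PD := fun p φ q h => by
    rw [← Finset.mem_coe, hPD]
    exact ⟨p, q, h⟩
  exact accepts_congr A I F fun q a q' =>
    (concreteStep_globalMinterms_iff A hguard q a q').symm

/-- Global mintermisation preserves the language of an SFA. -/
theorem globalMinterms_preserves_language {Q D P : Type} [DecidableEq P]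
    (A : EBA D P) (Δ : Set (Q × P × Q)) (I F : Set Q) (PD : Finset P)
    (hPD : ↑PD = {φ : P | ∃ p q, (p, φ, q) ∈ Δ})
    (hsat : ∀ p φ q, (p, φ, q) ∈ Δ → (A.denote φ).Nonempty) :
    ∀ w : List D, accepts A Δ I F w ↔ accepts A (globalMinterms A Δ PD) I F w :=
  globalMinterms_preserves_language_general A Δ I F PD hPD
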